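/- arXiv:2605.15348 — 2 statements merged into one kernel-verified Lean document; each statement's English description precedes it below -/
import Mathlib

section
/- Corollary (finite form of the non-overlapping BLO threshold bound): fix n, m ≥ 1 natural numbers and p ∈ [0, 1/2). Let 𝓑 be a finite family of pairwise disjoint finite subsets of Fin n, each of cardinality at least m. Then, for the random subset E of Fin n in which each element is included independently with probability p, the probability of the event { ∃ nonempty sub-family S ⊆ 𝓑 with 2·|E ∩ (⋃_{L∈S} L)| ≥ |⋃_{L∈S} L| } is at most |𝓑| · exp(−2m(1/2 − p)²), and moreover |𝓑| ≤ n/m. -/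
/-!
On a disjoint union the proportion of points in `E` is an average of the proportions on the
blocks, so if the union is at least half in `E` then some block `L ∈ 𝓑` is. By Hoeffding's
inequality for the `|L| ≥ m` independent indicators of `E` on `L`, this has probability at most
`exp (-2m(1/2 - p)²)`, and a union bound over `𝓑` concludes. Disjointness also gives
`|𝓑| · m ≤ n`.
-/

open MeasureTheory

/-- The product over `Fin n` of the Bernoulli measure on `Bool` assigning
probability `p` to `true` (for `0 ≤ p ≤ 1`, where the clamping by `1` is inert). -/
noncomputable def productBernoulli (n : ℕ) (p : ℝ) : Measure (Fin n → Bool) :=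
  Measure.pi fun _ =>
    (PMF.bernoulli (min (Real.toNNReal p) 1) (min_le_right _ _)).toMeasure

/-- The random error subset of `Fin n` determined by a sample `ω : Fin n → Bool`. -/
def errSet {n : ℕ} (ω : Fin n → Bool) : Finset (Fin n) :=
  Finset.univ.filter fun i => ω i = true

open ProbabilityTheory

section Combinatorics

variable {α : Type*} [DecidableEq α] {𝓑 : Finset (Finset α)}

lemma exists_card_le_two_mul_card_inter_of_pairwiseDisjoint
    (hdisj : (𝓑 : Set (Finset α)).PairwiseDisjoint id) (hne : 𝓑.Nonempty) {E : Finset α}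
    (h : (𝓑.biUnion id).card ≤ 2 * (E ∩ 𝓑.biUnion id).card) :
    ∃ L ∈ 𝓑, L.card ≤ 2 * (E ∩ L).card := by
  have hdisjE : (𝓑 : Set (Finset α)).PairwiseDisjoint (fun L => E ∩ id L) :=
    hdisj.mono fun _ => Finset.inter_subset_right
  rw [Finset.inter_biUnion, Finset.card_biUnion hdisj, Finset.card_biUnion hdisjE,
    Finset.mul_sum] at h
  exact Finset.exists_le_of_sum_le hne h

lemma card_mul_le_card_of_pairwiseDisjoint [Fintype α] {m : ℕ}
    (hdisj : (𝓑 : Set (Finset α)).PairwiseDisjoint id) (hcard : ∀ L ∈ 𝓑, m ≤ L.card) :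
    𝓑.card * m ≤ Fintype.card α :=
  calc 𝓑.card * m ≤ ∑ L ∈ 𝓑, L.card := by
        simpa [mul_comm] using Finset.card_nsmul_le_sum 𝓑 Finset.card m hcard
    _ = (𝓑.biUnion id).card := (Finset.card_biUnion hdisj).symm
    _ ≤ Fintype.card α := Finset.card_le_univ _

end Combinatorics

instance (n : ℕ) (p : ℝ) : IsProbabilityMeasure (productBernoulli n p) := by
  unfold productBernoulli; infer_instance

section Bernoulli

variable {n : ℕ} {p : ℝ}

lemma integral_ite_productBernoulli (hp0 : 0 ≤ p) (hp1 : p ≤ 1) (i : Fin n) :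
    ∫ ω, (if ω i then 1 else 0 : ℝ) ∂productBernoulli n p = p := by
  refine (integral_comp_eval (X := fun _ => Bool) (f := fun b => if b then (1 : ℝ) else 0)
    (by fun_prop)).trans ?_
  simp [PMF.integral_eq_sum, PMF.bernoulli_apply, min_eq_left (Real.toNNReal_le_one.2 hp1), hp0]

lemma sum_ite_eq_card_errSet_inter (ω : Fin n → Bool) (L : Finset (Fin n)) :
    ∑ i ∈ L, (if ω i then 1 else 0 : ℝ) = (errSet ω ∩ L).card := by
  rw [Finset.sum_boole]
  congr 2
  ext i
  simp [errSet, and_comm]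

lemma productBernoulli_card_le_two_mul_card_errSet_inter_le (hp0 : 0 ≤ p) (hp : p ≤ 1 / 2)
    {m : ℕ} {L : Finset (Fin n)} (hmL : m ≤ L.card) :
    productBernoulli n p {ω | L.card ≤ 2 * (errSet ω ∩ L).card}
      ≤ ENNReal.ofReal (Real.exp (-2 * m * (1 / 2 - p) ^ 2)) := by
  set X : Fin n → (Fin n → Bool) → ℝ := fun i ω => (if ω i then 1 else 0) - p
  have hindep : iIndepFun X (productBernoulli n p) :=
    (iIndepFun_pi (X := fun _ (b : Bool) => if b then (1 : ℝ) else 0) fun _ => .of_discrete).comp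
      (fun _ x => x - p) fun _ => by fun_prop
  have hsubG : ∀ i ∈ L, HasSubgaussianMGF (X i) 4⁻¹ (productBernoulli n p) := by
    intro i _
    have := hasSubgaussianMGF_of_mem_Icc (μ := productBernoulli n p)
      (X := fun ω => if ω i then (1 : ℝ) else 0) (a := 0) (b := 1) (by fun_prop)
      (ae_of_all _ fun ω => by split <;> simp)
    convert this using 2
    · simp [X, integral_ite_productBernoulli hp0 (by linarith)]
    · norm_num
  have hoeffding := HasSubgaussianMGF.measure_sum_ge_le_of_iIndepFun hindep hsubG
    (ε := L.card * (1 / 2 - p)) (by have := sub_nonneg.2 hp; positivity)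
  have hevent : {ω | L.card ≤ 2 * (errSet ω ∩ L).card}
      = {ω | L.card * (1 / 2 - p) ≤ ∑ i ∈ L, X i ω} := by
    ext ω
    simp only [Set.mem_setOf_eq, X, Finset.sum_sub_distrib, sum_ite_eq_card_errSet_inter,
      Finset.sum_const, nsmul_eq_mul, ← Nat.cast_le (α := ℝ), Nat.cast_mul, Nat.cast_ofNat]
    constructor <;> intro h <;> linarith
  rw [hevent, ← ofReal_measureReal]
  refine ENNReal.ofReal_le_ofReal (hoeffding.trans ?_)
  rw [Real.exp_le_exp, NNReal.coe_sum, Finset.sum_const, nsmul_eq_mul]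
  rcases Nat.eq_zero_or_pos L.card with h | h
  · simp [h, show m = 0 by omega]
  · have hmL' : (m : ℝ) ≤ L.card := by exact_mod_cast hmL
    rw [div_le_iff₀ (by positivity)]
    push_cast
    nlinarith [mul_nonneg (mul_nonneg (sub_nonneg.2 hmL') (Nat.cast_nonneg (α := ℝ) L.card))
      (sq_nonneg (1 / 2 - p))]

end Bernoulli

theorem nonoverlapping_BLO_union_bound_general (n m : ℕ) (hm : 1 ≤ m)
    (p : ℝ) (hp0 : 0 ≤ p) (hp : p < 1 / 2)
    (𝓑 : Finset (Finset (Fin n)))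
    (hdisj : (𝓑 : Set (Finset (Fin n))).Pairwise fun A B => Disjoint A B)
    (hcard : ∀ L ∈ 𝓑, m ≤ L.card) :
    productBernoulli n p
        {ω | ∃ S ⊆ 𝓑, S.Nonempty ∧
          (S.biUnion id).card ≤ 2 * (errSet ω ∩ S.biUnion id).card}
      ≤ ENNReal.ofReal ((𝓑.card : ℝ) * Real.exp (-2 * m * (1 / 2 - p) ^ 2)) ∧
    (𝓑.card : ℝ) ≤ (n : ℝ) / (m : ℝ) := by
  have hevent : {ω | ∃ S ⊆ 𝓑, S.Nonempty ∧
      (S.biUnion id).card ≤ 2 * (errSet ω ∩ S.biUnion id).card}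
      ⊆ ⋃ L ∈ 𝓑, {ω | L.card ≤ 2 * (errSet ω ∩ L).card} := by
    rintro ω ⟨S, hS, hne, h⟩
    obtain ⟨L, hL, hLω⟩ :=
      exists_card_le_two_mul_card_inter_of_pairwiseDisjoint (hdisj.mono hS) hne h
    exact Set.mem_biUnion (hS hL) hLω
  refine ⟨?_, ?_⟩
  · calc _ ≤ ∑ L ∈ 𝓑, productBernoulli n p {ω | L.card ≤ 2 * (errSet ω ∩ L).card} :=
          (measure_mono hevent).trans (measure_biUnion_finset_le 𝓑 _)
      _ ≤ ∑ _L ∈ 𝓑, ENNReal.ofReal (Real.exp (-2 * m * (1 / 2 - p) ^ 2)) :=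
          Finset.sum_le_sum fun L hL =>
            productBernoulli_card_le_two_mul_card_errSet_inter_le hp0 hp.le (hcard L hL)
      _ = _ := by rw [Finset.sum_const, nsmul_eq_mul, ENNReal.ofReal_mul (by positivity),
          ENNReal.ofReal_natCast]
  · rw [le_div_iff₀ (by exact_mod_cast hm)]
    exact_mod_cast (Fintype.card_fin n).subst (card_mul_le_card_of_pairwiseDisjoint hdisj hcard)

/-- Finite form of the non-overlapping BLO threshold bound: if `𝓑` is a pairwise
disjoint family of subsets of `Fin n`, each of cardinality at least `m`, then the
probability that some nonempty subfamily's union has at least half of its support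
in error is at most `|𝓑| · exp(−2m(1/2 − p)²)`, and moreover `|𝓑| ≤ n/m`. -/
theorem nonoverlapping_BLO_union_bound (n m : ℕ) (hn : 1 ≤ n) (hm : 1 ≤ m)
    (p : ℝ) (hp0 : 0 ≤ p) (hp : p < 1 / 2)
    (𝓑 : Finset (Finset (Fin n)))
    (hdisj : (𝓑 : Set (Finset (Fin n))).Pairwise fun A B => Disjoint A B)
    (hcard : ∀ L ∈ 𝓑, m ≤ L.card) :
    productBernoulli n p
        {ω | ∃ S ⊆ 𝓑, S.Nonempty ∧
          (S.biUnion id).card ≤ 2 * (errSet ω ∩ S.biUnion id).card}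
      ≤ ENNReal.ofReal ((𝓑.card : ℝ) * Real.exp (-2 * m * (1 / 2 - p) ^ 2)) ∧
    (𝓑.card : ℝ) ≤ (n : ℝ) / (m : ℝ) :=
  nonoverlapping_BLO_union_bound_general n m hm p hp0 hp 𝓑 hdisj hcard
end

section
/- Corollary 3 (threshold bound from a non-overlapping BLO), asymptotic form: let K > 0 and 0 < α ≤ 1 be real constants and p ∈ [0, 1/2). For each n, let 𝓑ₙ be a finite family of pairwise disjoint finite subsets of Fin n, each of cardinality at least K·n^α. Then there exists c > 0 such that for all sufficiently large n, the probability (under the random subset E of Fin n in which each element is included independently with probability p) of the event { ∃ nonempty sub-family S ⊆ 𝓑ₙ with 2·|E ∩ (⋃_{L∈S} L)| ≥ |⋃_{L∈S} L| } is at most exp(−c·n^α). -/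
open MeasureTheory

/-! A majority of errors on a disjoint union forces a majority on one of its parts, so a union
bound reduces the event to a single member `L` of `𝓑ₙ`. There, each of the at most `2 ^ |L|` error
patterns with `k ≥ |L| / 2` errors has probability `p ^ k (1 - p) ^ (|L| - k) ≤ √(p (1 - p)) ^ |L|`,
and `2 √(p (1 - p)) < 1` for `p < 1/2`, so the bad event on `L` has probability at most
`exp (-a |L|) ≤ exp (-a K n ^ α)` for some `a > 0`. The members are disjoint and nonempty, hence
at most `n` of them, and the factor `n` is absorbed since `log n = o(n ^ α)`. -/

open Finset Filter Real

lemma productBernoulli_errSet_inter_eq {n : ℕ} {p : ℝ} (hp0 : 0 ≤ p) (hp1 : p ≤ 1)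
    {T L : Finset (Fin n)} (hTL : T ⊆ L) :
    productBernoulli n p {ω | errSet ω ∩ L = T}
      = ENNReal.ofReal p ^ #T * ENNReal.ofReal (1 - p) ^ #(L \ T) := by
  have hset : {ω | errSet ω ∩ L = T} = (L : Set (Fin n)).pi fun i => {decide (i ∈ T)} := by
    ext ω
    simp only [Set.mem_ofPred_eq, Set.mem_pi, mem_coe, Set.mem_singleton_iff, Finset.ext_iff,
      errSet, mem_inter, mem_filter, mem_univ, true_and]
    refine ⟨fun h i hi => ?_, fun h i => ?_⟩
    · have := h i
      by_cases hiT : i ∈ T <;> simp_all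
    · by_cases hi : i ∈ L
      · simp [h i hi, hi]
      · simp only [hi, and_false, false_iff]
        exact fun hiT => hi (hTL hiT)
  have hsingle : ∀ b : Bool,
      (PMF.bernoulli (min (Real.toNNReal p) 1) (min_le_right _ _)).toMeasure {b}
        = if b then ENNReal.ofReal p else ENNReal.ofReal (1 - p) := by
    intro b
    rw [PMF.toMeasure_apply_singleton _ _ (measurableSet_singleton _), PMF.bernoulli_apply,
      min_eq_left (Real.toNNReal_le_one.2 hp1)]
    cases b
    · rw [ENNReal.ofReal_sub _ hp0, ENNReal.ofReal_one]; rfl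
    · rfl
  rw [productBernoulli, hset, Measure.pi_pi_finset]
  simp only [hsingle, decide_eq_true_eq]
  rw [prod_ite, prod_const, prod_const, filter_mem_eq_inter, inter_eq_right.2 hTL, filter_not,
    filter_mem_eq_inter, inter_eq_right.2 hTL]

lemma pow_mul_one_sub_pow_le_sqrt_pow {p : ℝ} (hp0 : 0 ≤ p) (hp : p ≤ 1 / 2) {k m : ℕ}
    (hkm : k ≤ m) (hmk : m ≤ 2 * k) :
    p ^ k * (1 - p) ^ (m - k) ≤ √(p * (1 - p)) ^ m := by
  set q := √(p * (1 - p))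
  have hpq : p ≤ q := le_sqrt_of_sq_le (by nlinarith)
  calc p ^ k * (1 - p) ^ (m - k) = (p * (1 - p)) ^ (m - k) * p ^ (2 * k - m) := by
        rw [mul_pow, mul_right_comm, ← pow_add]; congr 2; omega
    _ = q ^ (2 * (m - k)) * p ^ (2 * k - m) := by
        rw [pow_mul, sq_sqrt (by nlinarith)]
    _ ≤ q ^ (2 * (m - k)) * q ^ (2 * k - m) := by gcongr
    _ = q ^ m := by rw [← pow_add]; congr 1; omega

lemma productBernoulli_card_le_two_mul_card_inter_le {n : ℕ} {p : ℝ} (hp0 : 0 ≤ p)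
    (hp : p ≤ 1 / 2) (L : Finset (Fin n)) :
    productBernoulli n p {ω | #L ≤ 2 * #(errSet ω ∩ L)}
      ≤ ENNReal.ofReal ((2 * √(p * (1 - p))) ^ #L) := by
  set 𝒯 := L.powerset.filter fun T => #L ≤ 2 * #T
  have hsub : {ω | #L ≤ 2 * #(errSet ω ∩ L)} ⊆ ⋃ T ∈ 𝒯, {ω | errSet ω ∩ L = T} :=
    fun ω hω => Set.mem_biUnion (mem_filter.2 ⟨mem_powerset.2 inter_subset_right, hω⟩) rfl
  calc productBernoulli n p {ω | #L ≤ 2 * #(errSet ω ∩ L)}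
      ≤ ∑ T ∈ 𝒯, productBernoulli n p {ω | errSet ω ∩ L = T} :=
        (measure_mono hsub).trans (measure_biUnion_finset_le _ _)
    _ ≤ ∑ _T ∈ 𝒯, ENNReal.ofReal (√(p * (1 - p)) ^ #L) := by
        refine sum_le_sum fun T hT => ?_
        obtain ⟨hTL, hT⟩ := mem_filter.1 hT
        rw [mem_powerset] at hTL
        rw [productBernoulli_errSet_inter_eq hp0 (by linarith) hTL, card_sdiff_of_subset hTL,
          ← ENNReal.ofReal_pow hp0, ← ENNReal.ofReal_pow (by linarith),
          ← ENNReal.ofReal_mul (by positivity)]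
        exact ENNReal.ofReal_le_ofReal
          (pow_mul_one_sub_pow_le_sqrt_pow hp0 hp (card_le_card hTL) hT)
    _ ≤ 2 ^ #L * ENNReal.ofReal (√(p * (1 - p)) ^ #L) := by
        rw [sum_const, nsmul_eq_mul]
        gcongr
        exact_mod_cast (card_filter_le _ _).trans (card_powerset L).le
    _ = ENNReal.ofReal ((2 * √(p * (1 - p))) ^ #L) := by
        rw [mul_pow, ENNReal.ofReal_mul (by positivity), ENNReal.ofReal_pow zero_le_two,
          ENNReal.ofReal_ofNat]

lemma Finset.exists_card_le_two_mul_card_inter {ι α : Type*} [DecidableEq α] {s : Finset ι}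
    {f : ι → Finset α} (hf : (s : Set ι).PairwiseDisjoint f) (hs : s.Nonempty) (E : Finset α)
    (h : #(s.biUnion f) ≤ 2 * #(E ∩ s.biUnion f)) : ∃ i ∈ s, #(f i) ≤ 2 * #(E ∩ f i) := by
  by_contra! hlt
  have hE : (s : Set ι).PairwiseDisjoint fun i => E ∩ f i :=
    hf.mono fun i => inter_subset_right
  rw [card_biUnion hf, inter_biUnion, card_biUnion hE, mul_sum] at h
  exact (sum_lt_sum_of_nonempty hs hlt).not_ge h

lemma productBernoulli_exists_subfamily_le {n : ℕ} {p : ℝ} (hp0 : 0 ≤ p) (hp : p ≤ 1 / 2)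
    {𝓑 : Finset (Finset (Fin n))} (h𝓑 : (𝓑 : Set (Finset (Fin n))).PairwiseDisjoint id) :
    productBernoulli n p {ω | ∃ S ⊆ 𝓑, S.Nonempty ∧
        #(S.biUnion id) ≤ 2 * #(errSet ω ∩ S.biUnion id)}
      ≤ ∑ L ∈ 𝓑, ENNReal.ofReal ((2 * √(p * (1 - p))) ^ #L) := by
  have hsub : {ω | ∃ S ⊆ 𝓑, S.Nonempty ∧ #(S.biUnion id) ≤ 2 * #(errSet ω ∩ S.biUnion id)}
      ⊆ ⋃ L ∈ 𝓑, {ω | #L ≤ 2 * #(errSet ω ∩ L)} := by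
    rintro ω ⟨S, hS, hSne, hmaj⟩
    obtain ⟨L, hL, hLmaj⟩ :=
      exists_card_le_two_mul_card_inter (h𝓑.subset (coe_subset.2 hS)) hSne _ hmaj
    exact Set.mem_biUnion (hS hL) hLmaj
  calc _ ≤ ∑ L ∈ 𝓑, productBernoulli n p {ω | #L ≤ 2 * #(errSet ω ∩ L)} :=
        (measure_mono hsub).trans (measure_biUnion_finset_le _ _)
    _ ≤ _ := sum_le_sum fun L _ => productBernoulli_card_le_two_mul_card_inter_le hp0 hp L

lemma two_mul_sqrt_mul_one_sub_lt_one {p : ℝ} (hp : p < 1 / 2) : 2 * √(p * (1 - p)) < 1 := by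
  have : √(p * (1 - p)) < 1 / 2 := (sqrt_lt' one_half_pos).2 (by nlinarith)
  linarith

lemma Real.exists_pos_le_exp_neg {x : ℝ} (hx : x < 1) : ∃ a > 0, x ≤ exp (-a) := by
  have hpos : 0 < max x (1 / 2) := lt_max_of_lt_right one_half_pos
  refine ⟨-log (max x (1 / 2)), neg_pos.2 (log_neg hpos (max_lt hx one_half_lt_one)), ?_⟩
  rw [neg_neg, exp_log hpos]
  exact le_max_left _ _

lemma eventually_natCast_mul_exp_neg_le {α b : ℝ} (hα : 0 < α) (hb : 0 < b) :
    ∀ᶠ n : ℕ in atTop, (n : ℝ) * exp (-b * (n : ℝ) ^ α) ≤ exp (-(b / 2) * (n : ℝ) ^ α) := by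
  have hlog := (isLittleO_log_rpow_atTop hα).bound (half_pos hb)
  filter_upwards [tendsto_natCast_atTop_atTop.eventually hlog, eventually_ge_atTop 1]
    with n hlogn hn
  have hn0 : (0 : ℝ) < n := by exact_mod_cast hn
  rw [norm_eq_abs, norm_of_nonneg (by positivity)] at hlogn
  calc (n : ℝ) * exp (-b * (n : ℝ) ^ α) = exp (log n - b * (n : ℝ) ^ α) := by
        rw [sub_eq_add_neg, exp_add, exp_log hn0, neg_mul]
    _ ≤ exp (-(b / 2) * (n : ℝ) ^ α) := exp_le_exp.2 (by linarith [le_abs_self (log n)])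

theorem nonoverlapping_BLO_threshold_general (K α p : ℝ)
    (hK : 0 < K) (hα0 : 0 < α) (hp0 : 0 ≤ p) (hp : p < 1 / 2)
    (𝓑 : (n : ℕ) → Finset (Finset (Fin n)))
    (hdisj : ∀ n : ℕ, ((𝓑 n : Set (Finset (Fin n)))).Pairwise fun A B => Disjoint A B)
    (hcard : ∀ n : ℕ, ∀ L ∈ 𝓑 n, K * (n : ℝ) ^ α ≤ (L.card : ℝ)) :
    ∃ c > 0, ∀ᶠ n : ℕ in Filter.atTop,
      productBernoulli n p
          {ω | ∃ S ⊆ 𝓑 n, S.Nonempty ∧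
            (S.biUnion id).card ≤ 2 * (errSet ω ∩ S.biUnion id).card}
        ≤ ENNReal.ofReal (Real.exp (-c * (n : ℝ) ^ α)) := by
  obtain ⟨a, ha, hdecay⟩ := exists_pos_le_exp_neg (two_mul_sqrt_mul_one_sub_lt_one hp)
  refine ⟨a * K / 2, by positivity, ?_⟩
  filter_upwards [eventually_natCast_mul_exp_neg_le hα0 (mul_pos ha hK), eventually_ge_atTop 1]
    with n hn hn1
  have hKn : 0 < K * (n : ℝ) ^ α := mul_pos hK (rpow_pos_of_pos (by exact_mod_cast hn1) α)
  have hmember (L) (hL : L ∈ 𝓑 n) : (2 * √(p * (1 - p))) ^ #L ≤ exp (-(a * K) * n ^ α) := calc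
    (2 * √(p * (1 - p))) ^ #L ≤ exp (-a) ^ #L := pow_le_pow_left₀ (by positivity) hdecay _
    _ = exp (-a * #L) := by rw [← exp_nat_mul, mul_neg, neg_mul, mul_comm]
    _ ≤ exp (-(a * K) * n ^ α) := exp_le_exp.2 (by nlinarith [hcard n L hL])
  have h𝓑 : #(𝓑 n) ≤ n := calc
    #(𝓑 n) ≤ #((𝓑 n).biUnion id) := card_le_card_biUnion (hdisj n) fun L hL =>
      card_pos.1 (by exact_mod_cast hKn.trans_le (hcard n L hL))
    _ ≤ n := (card_le_univ _).trans_eq (Fintype.card_fin n)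
  calc _ ≤ ∑ L ∈ 𝓑 n, ENNReal.ofReal ((2 * √(p * (1 - p))) ^ #L) :=
        productBernoulli_exists_subfamily_le hp0 hp.le (hdisj n)
    _ ≤ #(𝓑 n) * ENNReal.ofReal (exp (-(a * K) * n ^ α)) := by
        rw [← nsmul_eq_mul, ← sum_const]
        exact sum_le_sum fun L hL => ENNReal.ofReal_le_ofReal (hmember L hL)
    _ ≤ ENNReal.ofReal (n * exp (-(a * K) * n ^ α)) := by
        rw [ENNReal.ofReal_mul n.cast_nonneg, ENNReal.ofReal_natCast]
        gcongr
    _ ≤ _ := ENNReal.ofReal_le_ofReal hn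

/-- Corollary 3 (threshold bound from a non-overlapping BLO), asymptotic form: if
each `𝓑ₙ` is a pairwise disjoint family of subsets of `Fin n` with each member of
cardinality at least `K·n^α`, then for some `c > 0` the probability that some
nonempty subfamily's union has at least half of its support in error is eventually
at most `exp(−c·n^α)`. -/
theorem nonoverlapping_BLO_threshold (K α p : ℝ)
    (hK : 0 < K) (hα0 : 0 < α) (hα1 : α ≤ 1) (hp0 : 0 ≤ p) (hp : p < 1 / 2)
    (𝓑 : (n : ℕ) → Finset (Finset (Fin n)))
    (hdisj : ∀ n : ℕ, ((𝓑 n : Set (Finset (Fin n)))).Pairwise fun A B => Disjoint A B)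
    (hcard : ∀ n : ℕ, ∀ L ∈ 𝓑 n, K * (n : ℝ) ^ α ≤ (L.card : ℝ)) :
    ∃ c > 0, ∀ᶠ n : ℕ in Filter.atTop,
      productBernoulli n p
          {ω | ∃ S ⊆ 𝓑 n, S.Nonempty ∧
            (S.biUnion id).card ≤ 2 * (errSet ω ∩ S.biUnion id).card}
        ≤ ENNReal.ofReal (Real.exp (-c * (n : ℝ) ^ α)) :=
  nonoverlapping_BLO_threshold_general K α p hK hα0 hp0 hp 𝓑 hdisj hcard
end
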